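/- arXiv:2104.11895 — 3 statements merged into one kernel-verified Lean document; each statement's English description precedes it below -/
import Mathlib

section
/- Let m ≥ (n+1)(d−r+1) and suppose ℓ'(0) > 0. Under the loss assumption and the dataset assumption, if there exists a number C > 0 such that for every k = 1,…,d−r+1, max_{u∈𝔹^d} |Σ_{i=1}^n ℓ'(−y_i f(x_i;θ*)) y_i (u^⊤(x_i⊙φ_k))_+| ≤ C, then the network with parameter θ* achieves training error R_n(θ*;f) ≤ (C + 2E)/(ℓ'(0)·γ·n). -/
open scoped BigOperators
open MeasureTheory

noncomputable section

/-- Vectors in `ℝ^d` with the Euclidean norm. -/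
abbrev Vec (d : ℕ) := EuclideanSpace ℝ (Fin d)

/-- Hadamard (entrywise) product. -/
def nnHad {d : ℕ} (x φ : Vec d) : Vec d := WithLp.toLp 2 (fun i => x i * φ i)

/-- ReLU. -/
def nnRelu (z : ℝ) : ℝ := max z 0

/-- Euclidean dot product. -/
def nnDot {d : ℕ} (u v : Vec d) : ℝ := ∑ i, u i * v i

/-- Output of the two-layer ReLU network with masks `φ`. -/
def nnOut {d m : ℕ} (φ : ℕ → Vec d) (a : Fin m → ℝ) (w : Fin m → Vec d) (x : Vec d) : ℝ :=
  ∑ j, a j * nnRelu (nnDot (w j) (nnHad x (φ (j : ℕ))))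

/-- The regularized empirical loss `L_n(θ; λ)`. -/
def nnLoss {d m n : ℕ} (ℓ : ℝ → ℝ) (φ : ℕ → Vec d) (X : Fin n → Vec d) (Y : Fin n → ℝ)
    (lam : Fin m → ℝ) (θ : (Fin m → ℝ) × (Fin m → Vec d)) : ℝ :=
  (∑ i, ℓ (-(Y i) * nnOut φ θ.1 θ.2 (X i)))
    + (1 / 2) * ∑ j, lam j * ((θ.1 j) ^ 2 + ‖θ.2 j‖ ^ 2)

/-- The training (misclassification) error `R_n(θ; f)`. -/
def nnErr {d m n : ℕ} (φ : ℕ → Vec d) (X : Fin n → Vec d) (Y : Fin n → ℝ)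
    (θ : (Fin m → ℝ) × (Fin m → Vec d)) : ℝ :=
  (1 / (n : ℝ)) * ∑ i, if Y i = Real.sign (nnOut φ θ.1 θ.2 (X i)) then (0 : ℝ) else 1

/-- The masks are binary vectors. -/
def BinaryMasks {d : ℕ} (φ : ℕ → Vec d) : Prop := ∀ k i, φ k i = 0 ∨ φ k i = 1

/-- The mask sequence is periodic with period `p`. -/
def PeriodicMasks {d : ℕ} (φ : ℕ → Vec d) (p : ℕ) : Prop := ∀ k, φ (k + p) = φ k

/-- Assumption 1 on the loss: convex, non-decreasing, twice differentiable, `ℓ` and `ℓ'`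
are `1`-Lipschitz, and `ℓ'(z) ≤ exp (a z)` for a positive constant `a`. -/
def LossAssumption (ℓ ℓ' : ℝ → ℝ) (a : ℝ) : Prop :=
  ConvexOn ℝ Set.univ ℓ ∧ Monotone ℓ ∧ (∀ z, HasDerivAt ℓ (ℓ' z) z) ∧
  (∀ z, DifferentiableAt ℝ ℓ' z) ∧ LipschitzWith 1 ℓ ∧ LipschitzWith 1 ℓ' ∧
  0 < a ∧ ∀ z, ℓ' z ≤ Real.exp (a * z)

/-- Assumption 2 on the dataset: all data in the unit ball, and all but `E` points are
separated with margin `γ` by some network in the class `H_φ`. -/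
def DatasetAssumption {d n : ℕ} (φ : ℕ → Vec d) (X : Fin n → Vec d) (Y : Fin n → ℝ)
    (E γ : ℝ) : Prop :=
  (∀ i, ‖X i‖ ≤ 1) ∧
  ∃ (M : ℕ) (c : Fin M → ℝ) (v : Fin M → Vec d),
    1 ≤ M ∧ (∑ j, |c j|) = 1 ∧ (∀ j, ‖v j‖ = 1) ∧
    (n : ℝ) - E ≤
      ∑ i, (if γ ≤ Y i * ∑ j, c j * nnRelu (nnDot (v j) (nnHad (X i) (φ (j : ℕ)))) then (1 : ℝ)
        else 0)

/-!
Let `h` be the classifier of `H_φ` with margin `γ` and `σᵢ = ℓ'(-yᵢ f(xᵢ; θ*)) ∈ [0, 1]`.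
By periodicity every neuron of `h` uses one of the first `d - r + 1` masks, so the flatness
hypothesis and `∑ |cⱼ| = 1` give `∑ σᵢ yᵢ h(xᵢ) ≤ C`. Termwise, `σᵢ yᵢ h(xᵢ)` is at least
`ℓ'(0) γ` at a misclassified point with margin (`ℓ'` is monotone), at least `0` at a correctly
classified point with margin, and at least `-1` at each of the at most `E` points without margin.
Summing gives `ℓ'(0) γ · #errors ≤ C + 2E`.
-/

namespace LossAssumption

variable {ℓ ℓ' : ℝ → ℝ} {a : ℝ}

theorem deriv_nonneg (hloss : LossAssumption ℓ ℓ' a) (z : ℝ) : 0 ≤ ℓ' z :=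
  (hloss.2.2.1 z).deriv ▸ hloss.2.1.deriv_nonneg

theorem deriv_le_one (hloss : LossAssumption ℓ ℓ' a) (z : ℝ) : ℓ' z ≤ 1 := by
  have hnorm : ‖deriv ℓ z‖ ≤ (1 : NNReal) := norm_deriv_le_of_lipschitz hloss.2.2.2.2.1
  rw [(hloss.2.2.1 z).deriv, Real.norm_eq_abs, NNReal.coe_one] at hnorm
  exact (le_abs_self _).trans hnorm

theorem monotone_deriv (hloss : LossAssumption ℓ ℓ' a) : Monotone ℓ' := by
  intro x y hxy
  have hderiv z : deriv ℓ z = ℓ' z := (hloss.2.2.1 z).deriv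
  simpa only [hderiv] using hloss.1.monotoneOn_deriv
    (fun z _ => (hloss.2.2.1 z).differentiableAt) (Set.mem_univ x) (Set.mem_univ y) hxy

end LossAssumption

theorem nnDot_eq_inner {d : ℕ} (u v : Vec d) : nnDot u v = inner ℝ u v := by
  simp [nnDot, PiLp.inner_apply, RCLike.inner_apply, mul_comm]

theorem norm_nnHad_le {d : ℕ} {ψ : Vec d} (hψ : ∀ i, ψ i = 0 ∨ ψ i = 1) (x : Vec d) :
    ‖nnHad x ψ‖ ≤ ‖x‖ := by
  rw [EuclideanSpace.norm_eq, EuclideanSpace.norm_eq]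
  refine Real.sqrt_le_sqrt (Finset.sum_le_sum fun i _ => ?_)
  rcases hψ i with h | h <;> simp [nnHad, h, sq_nonneg]

theorem abs_nnRelu_le (z : ℝ) : |nnRelu z| ≤ |z| := by
  rw [abs_of_nonneg (le_max_right _ _)]
  exact max_le (le_abs_self z) (abs_nonneg z)

theorem abs_nnRelu_nnDot_nnHad_le {d : ℕ} {ψ : Vec d} (hψ : ∀ i, ψ i = 0 ∨ ψ i = 1)
    (v x : Vec d) : |nnRelu (nnDot v (nnHad x ψ))| ≤ ‖v‖ * ‖x‖ :=
  calc |nnRelu (nnDot v (nnHad x ψ))| ≤ |nnDot v (nnHad x ψ)| := abs_nnRelu_le _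
    _ ≤ ‖v‖ * ‖nnHad x ψ‖ := nnDot_eq_inner v _ ▸ abs_real_inner_le_norm v _
    _ ≤ ‖v‖ * ‖x‖ := by gcongr; exact norm_nnHad_le hψ x

theorem abs_sum_mul_le {κ : Type*} [Fintype κ] (c g : κ → ℝ) {B : ℝ} (hg : ∀ j, |g j| ≤ B) :
    |∑ j, c j * g j| ≤ (∑ j, |c j|) * B :=
  calc |∑ j, c j * g j| ≤ ∑ j, |c j| * |g j| := by
        simpa only [abs_mul] using Finset.abs_sum_le_sum_abs (fun j => c j * g j) Finset.univ
    _ ≤ ∑ j, |c j| * B := by gcongr with j; exact hg j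
    _ = (∑ j, |c j|) * B := (Finset.sum_mul _ _ _).symm

theorem abs_sum_mul_sum_mul_le {ι κ : Type*} [Fintype ι] [Fintype κ] (w : ι → ℝ) (c : κ → ℝ)
    (g : κ → ι → ℝ) {B : ℝ} (hg : ∀ j, |∑ i, w i * g j i| ≤ B) :
    |∑ i, w i * ∑ j, c j * g j i| ≤ (∑ j, |c j|) * B := by
  have hswap : ∑ i, w i * ∑ j, c j * g j i = ∑ j, c j * ∑ i, w i * g j i := by
    simp only [Finset.mul_sum]
    rw [Finset.sum_comm]
    exact Finset.sum_congr rfl fun j _ => Finset.sum_congr rfl fun i _ => by ring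
  rw [hswap]
  exact abs_sum_mul_le c _ hg

theorem neg_mul_nonneg_of_ne_sign {y f : ℝ} (hy : y = 1 ∨ y = -1) (hf : y ≠ Real.sign f) :
    0 ≤ -y * f := by
  rcases hy with rfl | rfl
  · have : ¬ 0 < f := fun hpos => hf (Real.sign_of_pos hpos).symm
    linarith
  · have : ¬ f < 0 := fun hneg => hf (Real.sign_of_neg hneg).symm
    linarith

theorem misclassified_le_correlation_add_margin_failure {ℓ' : ℝ → ℝ} (h0 : ∀ z, 0 ≤ ℓ' z)
    (h1 : ∀ z, ℓ' z ≤ 1) (hmono : Monotone ℓ') {γ y f t : ℝ} (hγ : 0 < γ ∧ γ ≤ 1)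
    (hy : y = 1 ∨ y = -1) (ht : |t| ≤ 1) :
    ℓ' 0 * γ * (if y = Real.sign f then 0 else 1)
      ≤ ℓ' (-y * f) * y * t + 2 * (1 - if γ ≤ y * t then 1 else 0) := by
  rw [mul_assoc (ℓ' (-y * f))]
  by_cases hmargin : γ ≤ y * t
  · rw [if_pos hmargin, sub_self, mul_zero, add_zero]
    split_ifs with hcorrect
    · rw [mul_zero]
      exact mul_nonneg (h0 _) (hγ.1.le.trans hmargin)
    · have hweight : ℓ' 0 ≤ ℓ' (-y * f) := hmono (neg_mul_nonneg_of_ne_sign hy hcorrect)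
      rw [mul_one]
      exact mul_le_mul hweight hmargin hγ.1.le (h0 _)
  · rw [if_neg hmargin, sub_zero, mul_one]
    have hy1 : |y| = 1 := by rcases hy with rfl | rfl <;> norm_num
    have hcorr : |ℓ' (-y * f) * (y * t)| ≤ 1 := by
      rw [abs_mul, abs_mul, hy1, one_mul, abs_of_nonneg (h0 _)]
      exact mul_le_one₀ (h1 _) (abs_nonneg _) ht
    have hlhs : ℓ' 0 * γ * (if y = Real.sign f then 0 else 1) ≤ 1 := by
      refine mul_le_one₀ (mul_le_one₀ (h1 0) hγ.1.le hγ.2) ?_ ?_ <;> split_ifs <;> norm_num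
    linarith [neg_abs_le (ℓ' (-y * f) * (y * t))]

theorem flat_directions_memorize_general
    {d m n r : ℕ} (φ : ℕ → Vec d)
    (X : Fin n → Vec d) (Y : Fin n → ℝ)
    (ℓ ℓ' : ℝ → ℝ) (a E γ C : ℝ)
    (hmask : BinaryMasks φ) (hper : PeriodicMasks φ (d - r + 1))
    (hY : ∀ i, Y i = 1 ∨ Y i = -1)
    (hloss : LossAssumption ℓ ℓ' a)
    (hγ : 0 < γ ∧ γ ≤ 1)
    (hdata : DatasetAssumption φ X Y E γ)
    (hd0 : 0 < ℓ' 0)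
    (θstar : (Fin m → ℝ) × (Fin m → Vec d))
    (hflat : ∀ k : ℕ, k < d - r + 1 → ∀ u : Vec d, ‖u‖ ≤ 1 →
      |∑ i, ℓ' (-(Y i) * nnOut φ θstar.1 θstar.2 (X i)) * Y i *
          nnRelu (nnDot u (nnHad (X i) (φ k)))| ≤ C) :
    nnErr φ X Y θstar ≤ (C + 2 * E) / (ℓ' 0 * γ * n) := by
  obtain ⟨hXnorm, M, c, v, -, hc1, hv, hsep⟩ := hdata
  set f : Vec d → ℝ := nnOut φ θstar.1 θstar.2
  set h : Vec d → ℝ := fun x => ∑ j, c j * nnRelu (nnDot (v j) (nnHad x (φ j)))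
  have hh i : |h (X i)| ≤ 1 := by
    simpa [hc1] using abs_sum_mul_le c _ fun j =>
      (abs_nnRelu_nnDot_nnHad_le (hmask j) (v j) (X i)).trans (by rw [hv j, one_mul]; exact hXnorm i)
  have hcorr : ∑ i, ℓ' (-(Y i) * f (X i)) * Y i * h (X i) ≤ C := by
    refine (le_abs_self _).trans ?_
    simpa [hc1] using abs_sum_mul_sum_mul_le (fun i => ℓ' (-(Y i) * f (X i)) * Y i) c
      (fun j i => nnRelu (nnDot (v j) (nnHad (X i) (φ j)))) fun j => by
        rw [← Function.Periodic.map_mod_nat hper]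
        exact hflat _ (Nat.mod_lt _ (Nat.succ_pos _)) (v j) (hv j).le
  have hcount : ℓ' 0 * γ * ∑ i, (if Y i = Real.sign (f (X i)) then 0 else 1) ≤ C + 2 * E :=
    calc ℓ' 0 * γ * ∑ i, (if Y i = Real.sign (f (X i)) then 0 else 1)
        ≤ ∑ i, (ℓ' (-(Y i) * f (X i)) * Y i * h (X i)
            + 2 * (1 - if γ ≤ Y i * h (X i) then 1 else 0)) := by
          rw [Finset.mul_sum]
          exact Finset.sum_le_sum fun i _ => misclassified_le_correlation_add_margin_failure
            hloss.deriv_nonneg hloss.deriv_le_one hloss.monotone_deriv hγ (hY i) (hh i)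
      _ = ∑ i, ℓ' (-(Y i) * f (X i)) * Y i * h (X i)
            + 2 * (n - ∑ i, if γ ≤ Y i * h (X i) then 1 else 0) := by
          simp only [Finset.sum_add_distrib, ← Finset.mul_sum, Finset.sum_sub_distrib, Finset.sum_const,
            Finset.card_univ, Fintype.card_fin, nsmul_eq_mul, mul_one]
      _ ≤ C + 2 * E := by linarith
  rw [nnErr, one_div_mul_eq_div, ← div_div]
  exact div_le_div_of_nonneg_right ((le_div_iff₀' (mul_pos hd0 hγ.1)).2 hcount) n.cast_nonneg

theorem flat_directions_memorize
    {d m n r : ℕ} (φ : ℕ → Vec d)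
    (X : Fin n → Vec d) (Y : Fin n → ℝ)
    (ℓ ℓ' : ℝ → ℝ) (a E γ C : ℝ)
    (hr : 1 ≤ r) (hrd : r ≤ d)
    (hm : (n + 1) * (d - r + 1) ≤ m)
    (hmask : BinaryMasks φ) (hper : PeriodicMasks φ (d - r + 1))
    (hY : ∀ i, Y i = 1 ∨ Y i = -1)
    (hloss : LossAssumption ℓ ℓ' a)
    (hE : 0 ≤ E ∧ E ≤ n) (hγ : 0 < γ ∧ γ ≤ 1)
    (hdata : DatasetAssumption φ X Y E γ)
    (hd0 : 0 < ℓ' 0)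
    (hC : 0 < C)
    (θstar : (Fin m → ℝ) × (Fin m → Vec d))
    (hflat : ∀ k : ℕ, k < d - r + 1 → ∀ u : Vec d, ‖u‖ ≤ 1 →
      |∑ i, ℓ' (-(Y i) * nnOut φ θstar.1 θstar.2 (X i)) * Y i *
          nnRelu (nnDot u (nnHad (X i) (φ k)))| ≤ C) :
    nnErr φ X Y θstar ≤ (C + 2 * E) / (ℓ' 0 * γ * n) :=
  flat_directions_memorize_general φ X Y ℓ ℓ' a E γ C hmask hper hY hloss hγ hdata hd0 θstar hflat
end
end

section
/- Let ℓ : ℝ → ℝ be differentiable and let λ_j > 0 for all j ∈ [m]. If θ* = (a_1*,…,a_m*, w_1*,…,w_m*) is a local minimum of the regularized empirical loss L_n(·;λ), then (a_j*)² = ‖w_j*‖₂² for every j ∈ [m]. -/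
open scoped BigOperators
open MeasureTheory

noncomputable section

/-
Rescaling one neuron, `a_j ↦ c a_j` and `w_j ↦ c⁻¹ w_j` with `c > 0`, leaves the network
unchanged because the ReLU is positively homogeneous; only the regularizer moves, as
`K + (λ_j/2) (c² a_j² + c⁻² ‖w_j‖²)` with `K` independent of `c`. At a local minimum this
curve is stationary at `c = 1`, which forces `λ_j a_j² = λ_j ‖w_j‖²`.
-/

lemma nnRelu_mul_of_nonneg {c : ℝ} (hc : 0 ≤ c) (z : ℝ) : nnRelu (c * z) = c * nnRelu z := by
  simp only [nnRelu, mul_max_of_nonneg _ _ hc, mul_zero]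

lemma nnDot_smul_left {d : ℕ} (c : ℝ) (u v : Vec d) : nnDot (c • u) v = c * nnDot u v := by
  simp [nnDot, Finset.mul_sum, mul_assoc]

lemma eq_of_isLocalMin_sq_add_inv_sq {K p q : ℝ}
    (h : IsLocalMin (fun c : ℝ => K + p * c ^ 2 + q * c⁻¹ ^ 2) 1) : p = q := by
  have hderiv : HasDerivAt (fun c : ℝ => K + p * c ^ 2 + q * c⁻¹ ^ 2) (2 * p - 2 * q) 1 := by
    have hinv := ((hasDerivAt_inv one_ne_zero).fun_pow 2).const_mul q
    have hsq := ((hasDerivAt_pow 2 (1 : ℝ)).const_mul p).const_add K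
    exact (hsq.fun_add hinv).congr_deriv (by norm_num; ring)
  linarith [h.hasDerivAt_eq_zero hderiv]

section Rescaling

variable {d m : ℕ}

def rescaleNeuron (j : Fin m) (c : ℝ) (θ : (Fin m → ℝ) × (Fin m → Vec d)) :
    (Fin m → ℝ) × (Fin m → Vec d) :=
  (Function.update θ.1 j (c * θ.1 j), Function.update θ.2 j (c⁻¹ • θ.2 j))

lemma rescaleNeuron_one (j : Fin m) (θ : (Fin m → ℝ) × (Fin m → Vec d)) :
    rescaleNeuron j 1 θ = θ := by
  simp [rescaleNeuron]

lemma continuousAt_rescaleNeuron_one (j : Fin m) (θ : (Fin m → ℝ) × (Fin m → Vec d)) :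
    ContinuousAt (fun c => rescaleNeuron j c θ) 1 := by
  refine ContinuousAt.prodMk ?_ ?_
  · exact continuousAt_const.update j (continuousAt_id.mul continuousAt_const)
  · exact continuousAt_const.update j ((continuousAt_inv₀ one_ne_zero).smul continuousAt_const)

lemma nnOut_rescaleNeuron (φ : ℕ → Vec d) (j : Fin m) {c : ℝ} (hc : 0 < c)
    (θ : (Fin m → ℝ) × (Fin m → Vec d)) (x : Vec d) :
    nnOut φ (rescaleNeuron j c θ).1 (rescaleNeuron j c θ).2 x = nnOut φ θ.1 θ.2 x := by
  refine Finset.sum_congr rfl fun k _ => ?_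
  rcases eq_or_ne k j with rfl | hk
  · simp only [rescaleNeuron, Function.update_self, nnDot_smul_left,
      nnRelu_mul_of_nonneg (inv_nonneg.mpr hc.le)]
    field_simp
  · simp [rescaleNeuron, Function.update_of_ne hk]

lemma nnLoss_rescaleNeuron {n : ℕ} (ℓ : ℝ → ℝ) (φ : ℕ → Vec d) (X : Fin n → Vec d)
    (Y : Fin n → ℝ) (lam : Fin m → ℝ) (j : Fin m) {c : ℝ} (hc : 0 < c)
    (θ : (Fin m → ℝ) × (Fin m → Vec d)) :
    nnLoss ℓ φ X Y lam (rescaleNeuron j c θ) =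
      nnLoss ℓ φ X Y lam θ - lam j / 2 * (θ.1 j ^ 2 + ‖θ.2 j‖ ^ 2)
        + lam j / 2 * θ.1 j ^ 2 * c ^ 2 + lam j / 2 * ‖θ.2 j‖ ^ 2 * c⁻¹ ^ 2 := by
  have hreg : ∀ i, lam i * ((rescaleNeuron j c θ).1 i ^ 2 + ‖(rescaleNeuron j c θ).2 i‖ ^ 2) =
      lam i * (θ.1 i ^ 2 + ‖θ.2 i‖ ^ 2) + if i = j then
        lam j * ((c ^ 2 - 1) * θ.1 j ^ 2 + (c⁻¹ ^ 2 - 1) * ‖θ.2 j‖ ^ 2) else 0 := by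
    intro i
    rcases eq_or_ne i j with rfl | hi
    · simp only [rescaleNeuron, Function.update_self, norm_smul, norm_inv, Real.norm_eq_abs,
        abs_of_pos hc, ↓reduceIte, inv_pow]
      ring
    · simp [rescaleNeuron, hi]
  simp only [nnLoss, nnOut_rescaleNeuron φ j hc, hreg, Finset.sum_add_distrib,
    Finset.sum_ite_eq', Finset.mem_univ, if_true]
  ring

end Rescaling

theorem local_min_balanced_general
    {d m n : ℕ} (φ : ℕ → Vec d)
    (X : Fin n → Vec d) (Y : Fin n → ℝ)
    (ℓ : ℝ → ℝ)
    (lam : Fin m → ℝ) (hlam : ∀ j, 0 < lam j)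
    (θstar : (Fin m → ℝ) × (Fin m → Vec d))
    (hmin : IsLocalMin (nnLoss ℓ φ X Y lam) θstar) :
    ∀ j, (θstar.1 j) ^ 2 = ‖θstar.2 j‖ ^ 2 := by
  intro j
  have hcurve := IsLocalMin.comp_continuous (g := fun c : ℝ => rescaleNeuron j c θstar)
    (by rwa [rescaleNeuron_one]) (continuousAt_rescaleNeuron_one j θstar)
  have hbalance := eq_of_isLocalMin_sq_add_inv_sq <| hcurve.congr <|
    Filter.eventually_of_mem (Ioi_mem_nhds one_pos) fun c hc =>
      nnLoss_rescaleNeuron ℓ φ X Y lam j hc θstar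
  exact mul_left_cancel₀ (half_pos (hlam j)).ne' hbalance

theorem local_min_balanced
    {d m n : ℕ} (φ : ℕ → Vec d)
    (X : Fin n → Vec d) (Y : Fin n → ℝ)
    (hY : ∀ i, Y i = 1 ∨ Y i = -1)
    (ℓ : ℝ → ℝ) (hdiff : Differentiable ℝ ℓ)
    (lam : Fin m → ℝ) (hlam : ∀ j, 0 < lam j)
    (θstar : (Fin m → ℝ) × (Fin m → Vec d))
    (hmin : IsLocalMin (nnLoss ℓ φ X Y lam) θstar) :
    ∀ j, (θstar.1 j) ^ 2 = ‖θstar.2 j‖ ^ 2 :=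
  local_min_balanced_general φ X Y ℓ lam hlam θstar hmin
end
end

section
/- Let λ0 > 0, K > 0, n ≥ 1, and Q ≥ n+1 be given, let q_1,…,q_n ∈ ℝ^Q be arbitrary vectors, and let ρ_old ∈ ℝ^Q. Then there exists ρ ∈ ℝ^Q such that: (i) ρ_j ≤ (ρ_old)_j for every coordinate j ∈ [Q]; (ii) ‖ρ − ρ_old‖_∞ ≤ λ0/(2K); and (iii) for every p = (p_1,…,p_n) ∈ ℝ^n, ‖ρ − Σ_{i=1}^n p_i q_i‖₂ ≥ λ0/(8K). -/
/-!
The span of the `q i` has dimension at most `n < Q`, so it has a unit normal `u`, and the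
distance from `ρ` to the span is at least `|⟪ρ, u⟫|`. Lowering `ρold` by some `s ∈ [0, c]^Q`,
`c = λ₀ / (2K)`, moves `⟪ρ, u⟫` across an interval of length `c ‖u‖₁ ≥ c ‖u‖₂ = c` (take the two
extreme points `s = c · 1{u ≥ 0}` and `s = c · 1{u < 0}`), so one of its ends is at distance at
least `c / 2` from `⟪ρold, u⟫`.
-/

open scoped BigOperators

noncomputable section

open scoped RealInnerProductSpace

theorem span_range_ne_top_of_card_lt {E : Type*} [AddCommGroup E] [Module ℝ E]
    [FiniteDimensional ℝ E] {ι : Type*} [Fintype ι] (q : ι → E)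
    (h : Fintype.card ι < Module.finrank ℝ E) : Submodule.span ℝ (Set.range q) ≠ ⊤ := by
  intro htop
  have := finrank_range_le_card (R := ℝ) q
  rw [Set.finrank, htop, finrank_top] at this
  omega

theorem exists_norm_eq_one_mem_orthogonal {E : Type*} [NormedAddCommGroup E]
    [InnerProductSpace ℝ E] {K : Submodule ℝ E} [K.HasOrthogonalProjection] (hK : K ≠ ⊤) :
    ∃ u ∈ Kᗮ, ‖u‖ = 1 := by
  obtain ⟨v, hv, hv0⟩ := (Submodule.ne_bot_iff _).mp (mt Submodule.orthogonal_eq_bot_iff.mp hK)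
  exact ⟨‖v‖⁻¹ • v, Kᗮ.smul_mem _ hv, norm_smul_inv_norm hv0⟩

theorem abs_inner_le_norm_sub_of_mem_orthogonal {E : Type*} [NormedAddCommGroup E]
    [InnerProductSpace ℝ E] {K : Submodule ℝ E} {u w : E} (hu : u ∈ Kᗮ) (hu1 : ‖u‖ = 1)
    (hw : w ∈ K) (x : E) : |⟪x, u⟫| ≤ ‖x - w‖ := by
  calc |⟪x, u⟫| = |⟪x - w, u⟫| := by
        rw [inner_sub_left, Submodule.inner_right_of_mem_orthogonal hw hu, sub_zero]
    _ ≤ ‖x - w‖ := by simpa [hu1] using abs_real_inner_le_norm (x - w) u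

theorem EuclideanSpace.norm_le_sum_abs {ι : Type*} [Fintype ι] (u : EuclideanSpace ℝ ι) :
    ‖u‖ ≤ ∑ j, |u j| := by
  classical
  calc ‖u‖ = ‖∑ j, u j • EuclideanSpace.single j (1 : ℝ)‖ := by
        conv_lhs => rw [← (EuclideanSpace.basisFun ι ℝ).sum_repr u]
        simp
    _ ≤ ∑ j, ‖u j • EuclideanSpace.single j (1 : ℝ)‖ := norm_sum_le _ _
    _ = ∑ j, |u j| := by simp [norm_smul]

theorem half_abs_sub_le_abs_sub_or (a x y : ℝ) :
    |x - y| / 2 ≤ |a - x| ∨ |x - y| / 2 ≤ |a - y| := by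
  by_contra! h
  have := abs_sub_le x a y
  rw [abs_sub_comm x a] at this
  linarith [h.1, h.2]

theorem EuclideanSpace.inner_indicator_nonneg_sub_inner_indicator_neg {ι : Type*} [Fintype ι]
    (u : EuclideanSpace ℝ ι) (c : ℝ) :
    ⟪WithLp.toLp 2 (fun j => if 0 ≤ u j then c else 0), u⟫
      - ⟪WithLp.toLp 2 (fun j => if 0 ≤ u j then 0 else c), u⟫ = c * ∑ j, |u j| := by
  simp only [PiLp.inner_apply, ← Finset.sum_sub_distrib, Finset.mul_sum]
  refine Finset.sum_congr rfl fun j _ => ?_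
  split_ifs with h
  · simp [abs_of_nonneg h, mul_comm]
  · simp [abs_of_neg (not_le.mp h), mul_comm]

theorem EuclideanSpace.exists_mem_box_half_mul_norm_le_abs_sub_inner {ι : Type*} [Fintype ι]
    (u : EuclideanSpace ℝ ι) (a : ℝ) {c : ℝ} (hc : 0 ≤ c) :
    ∃ s : EuclideanSpace ℝ ι, (∀ j, 0 ≤ s j ∧ s j ≤ c) ∧ c * ‖u‖ / 2 ≤ |a - ⟪s, u⟫| := by
  set sPos : EuclideanSpace ℝ ι := WithLp.toLp 2 fun j => if 0 ≤ u j then c else 0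
  set sNeg : EuclideanSpace ℝ ι := WithLp.toLp 2 fun j => if 0 ≤ u j then 0 else c
  have hPos : ∀ j, 0 ≤ sPos j ∧ sPos j ≤ c := fun j => by
    simp only [sPos]; split_ifs <;> simp [hc]
  have hNeg : ∀ j, 0 ≤ sNeg j ∧ sNeg j ≤ c := fun j => by
    simp only [sNeg]; split_ifs <;> simp [hc]
  have hgap : c * ‖u‖ ≤ |⟪sPos, u⟫ - ⟪sNeg, u⟫| := by
    rw [inner_indicator_nonneg_sub_inner_indicator_neg, abs_of_nonneg (by positivity)]
    exact mul_le_mul_of_nonneg_left (norm_le_sum_abs u) hc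
  rcases half_abs_sub_le_abs_sub_or a ⟪sPos, u⟫ ⟪sNeg, u⟫ with h | h
  · exact ⟨sPos, hPos, by linarith⟩
  · exact ⟨sNeg, hNeg, by linarith⟩

theorem exists_regularization_coefficients_general
    (lam0 K : ℝ) (hlam0 : 0 < lam0) (hK : 0 < K)
    (n Q : ℕ) (hQ : n + 1 ≤ Q)
    (q : Fin n → EuclideanSpace ℝ (Fin Q))
    (ρold : EuclideanSpace ℝ (Fin Q)) :
    ∃ ρ : EuclideanSpace ℝ (Fin Q),
      (∀ j : Fin Q, ρ j ≤ ρold j) ∧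
      (∀ j : Fin Q, |ρ j - ρold j| ≤ lam0 / (2 * K)) ∧
      (∀ p : Fin n → ℝ, lam0 / (8 * K) ≤ ‖ρ - ∑ i, p i • q i‖) := by
  set S := Submodule.span ℝ (Set.range q)
  obtain ⟨u, hu, hu1⟩ := exists_norm_eq_one_mem_orthogonal (K := S)
    (span_range_ne_top_of_card_lt q (by rw [Fintype.card_fin, finrank_euclideanSpace_fin]; omega))
  obtain ⟨s, hs, hsu⟩ := EuclideanSpace.exists_mem_box_half_mul_norm_le_abs_sub_inner u
    ⟪ρold, u⟫ (c := lam0 / (2 * K)) (by positivity)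
  refine ⟨ρold - s, fun j => ?_, fun j => ?_, fun p => ?_⟩
  · simp only [PiLp.sub_apply]; linarith [hs j]
  · rw [PiLp.sub_apply, sub_sub_cancel_left, abs_neg, abs_of_nonneg (hs j).1]
    exact (hs j).2
  · have hmem : ∑ i, p i • q i ∈ S :=
      S.sum_mem fun i _ => S.smul_mem _ (Submodule.subset_span ⟨i, rfl⟩)
    calc lam0 / (8 * K) ≤ lam0 / (2 * K) * ‖u‖ / 2 := by
          rw [hu1]; field_simp; linarith
      _ ≤ |⟪ρold - s, u⟫| := by rwa [inner_sub_left]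
      _ ≤ _ := abs_inner_le_norm_sub_of_mem_orthogonal hu hu1 hmem _

theorem exists_regularization_coefficients
    (lam0 K : ℝ) (hlam0 : 0 < lam0) (hK : 0 < K)
    (n Q : ℕ) (hn : 1 ≤ n) (hQ : n + 1 ≤ Q)
    (q : Fin n → EuclideanSpace ℝ (Fin Q))
    (ρold : EuclideanSpace ℝ (Fin Q)) :
    ∃ ρ : EuclideanSpace ℝ (Fin Q),
      (∀ j : Fin Q, ρ j ≤ ρold j) ∧
      (∀ j : Fin Q, |ρ j - ρold j| ≤ lam0 / (2 * K)) ∧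
      (∀ p : Fin n → ℝ, lam0 / (8 * K) ≤ ‖ρ - ∑ i, p i • q i‖) :=
  exists_regularization_coefficients_general lam0 K hlam0 hK n Q hQ q ρold
end
end
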